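/- Let f(x; w) be a depth-d continued fraction ladder on ℝ^p with a_k = w_k^T x, i.e. f(x;w) = K_{d+1}(a_0,...,a_d)/K_d(a_1,...,a_d). Then at any x where K_d(a_1,...,a_d) ≠ 0, the partial derivative of f with respect to x_j equals the sum over k from 0 to d of (−1)^k · (K_{d−k}(a_{k+1},...,a_d)/K_d(a_1,...,a_d))² · w_{jk}. -/

import Mathlib

/-- Continuant polynomial: K [] = 1, K [a] = a,
K (a :: b :: l) = a * K (b :: l) + K l. -/
def cont {R : Type*} [CommRing R] : List R → R
  | [] => 1
  | [a] => a
  | a :: b :: l => a * cont (b :: l) + cont l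

/-! Both continuants of the ladder are components of
`contPair (a₀, …, a_d) = (K(a₀, …, a_d), K(a₁, …, a_d))`, which satisfies a first-order
recursion. A continuant is affine in each entry, with `∂K(a₀, …, a_d)/∂a_k = K(a₀, …, a_{k-1}) ·
K(a_{k+1}, …, a_d)`, and `∂a_k/∂x_j = w_{jk}`. In the quotient rule the `k`-th term therefore
carries the factor `K(a₀, …, a_{k-1}) K(a₁, …, a_d) - K(a₁, …, a_{k-1}) K(a₀, …, a_d)`, which the
determinant identity for continuants evaluates to `(-1)^k K(a_{k+1}, …, a_d)`. -/

section Continuant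

variable {R : Type*} [CommRing R]

/-- `contPair l = (K(l), K(l.tail))`, where `K(tail []) = K₋₁ = 0`. -/
def contPair : List R → R × R
  | [] => (1, 0)
  | a :: l => (a * (contPair l).1 + (contPair l).2, (contPair l).1)

@[simp]
theorem contPair_nil : contPair ([] : List R) = (1, 0) := rfl

theorem contPair_cons (a : R) (l : List R) :
    contPair (a :: l) = (a * (contPair l).1 + (contPair l).2, (contPair l).1) := rfl

theorem contPair_fst : ∀ l : List R, (contPair l).1 = cont l
  | [] => rfl
  | [a] => by simp [contPair_cons, cont]
  | a :: b :: l => by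
      rw [cont, ← contPair_fst (b :: l), ← contPair_fst l]
      rfl

theorem contPair_snd_cons (a : R) (l : List R) : (contPair (a :: l)).2 = cont l :=
  contPair_fst l

theorem contPair_ofFn_snd {n : ℕ} (v : Fin (n + 1) → R) :
    (contPair (List.ofFn v)).2 = cont (List.ofFn fun i : Fin n => v i.succ) := by
  rw [List.ofFn_succ, contPair_snd_cons]

theorem contPair_append_det (A M : List R) :
    cont A * (contPair (A ++ M)).2 - (contPair A).2 * cont (A ++ M) =
      (-1) ^ A.length * (contPair M).2 := by
  induction A with
  | nil => simp [cont]
  | cons a A ih =>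
    simp only [List.cons_append, ← contPair_fst, contPair_cons, List.length_cons, pow_succ] at ih ⊢
    linear_combination -ih

theorem contPair_take_det (l : List R) {k : ℕ} (hk : k < l.length) :
    cont (l.take k) * (contPair l).2 - (contPair (l.take k)).2 * cont l =
      (-1) ^ k * cont (l.drop (k + 1)) := by
  have h := contPair_append_det (l.take k) (l.drop k)
  rwa [List.take_append_drop, List.drop_eq_getElem_cons hk, contPair_snd_cons,
    List.length_take_of_le hk.le] at h

/-- The derivative of `contPair` at `List.ofFn v` in the direction `c`. -/
def contPairDeriv {n : ℕ} (v c : Fin n → R) : R × R :=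
  ∑ k : Fin n, (c k * cont ((List.ofFn v).drop (k + 1))) • contPair ((List.ofFn v).take k)

end Continuant

theorem contPair_quotient_rule_eq_sum_sq {K : Type*} [Field K] {n : ℕ} (v c : Fin n → K) :
    ((contPairDeriv v c).1 * (contPair (List.ofFn v)).2 -
        cont (List.ofFn v) * (contPairDeriv v c).2) /
        (contPair (List.ofFn v)).2 ^ 2 =
      ∑ k : Fin n, (-1) ^ (k : ℕ) *
        (cont ((List.ofFn v).drop (k + 1)) / (contPair (List.ofFn v)).2) ^ 2 * c k := by
  simp only [contPairDeriv, contPair_fst, Prod.fst_sum, Prod.snd_sum, Prod.smul_fst,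
    Prod.smul_snd, smul_eq_mul, Finset.sum_mul, Finset.mul_sum, ← Finset.sum_sub_distrib,
    Finset.sum_div]
  refine Finset.sum_congr rfl fun k _ => ?_
  have hdet := contPair_take_det (List.ofFn v) (k := k) (by simp)
  linear_combination c k * cont ((List.ofFn v).drop (k + 1)) /
    (contPair (List.ofFn v)).2 ^ 2 * hdet

theorem List.drop_succ_ofFn {α : Type*} {n k : ℕ} (v : Fin (n + 1) → α) (hk : k < n + 1) :
    (List.ofFn v).drop (k + 1) = List.ofFn fun i : Fin (n - k) => v ⟨k + 1 + i, by omega⟩ := by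
  apply List.ext_getElem <;> simp [Nat.add_right_comm]

section Derivative

variable {𝕜 : Type*} [NontriviallyNormedField 𝕜]

theorem HasDerivAt.fst {E F : Type*} [NormedAddCommGroup E] [NormedSpace 𝕜 E]
    [NormedAddCommGroup F] [NormedSpace 𝕜 F] {f : 𝕜 → E × F} {f' : E × F} {t : 𝕜}
    (h : HasDerivAt f f' t) : HasDerivAt (fun s => (f s).1) f'.1 t :=
  (hasFDerivAt_fst (𝕜 := 𝕜) (p := f t)).comp_hasDerivAt t h

theorem HasDerivAt.snd {E F : Type*} [NormedAddCommGroup E] [NormedSpace 𝕜 E]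
    [NormedAddCommGroup F] [NormedSpace 𝕜 F] {f : 𝕜 → E × F} {f' : E × F} {t : 𝕜}
    (h : HasDerivAt f f' t) : HasDerivAt (fun s => (f s).2) f'.2 t :=
  (hasFDerivAt_snd (𝕜 := 𝕜) (p := f t)).comp_hasDerivAt t h

theorem hasDerivAt_contPair_ofFn {n : ℕ} {a : Fin n → 𝕜 → 𝕜} {a' : Fin n → 𝕜} {t : 𝕜}
    (ha : ∀ k, HasDerivAt (a k) (a' k) t) :
    HasDerivAt (fun s => contPair (List.ofFn fun k => a k s))
      (contPairDeriv (fun k => a k t) a') t := by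
  induction n with
  | zero =>
    simp only [contPairDeriv, Finset.univ_eq_empty, Finset.sum_empty]
    exact hasDerivAt_const t _
  | succ n ih =>
    have hP := ih fun k => ha k.succ
    unfold contPairDeriv at hP ⊢
    simp only [List.ofFn_succ, contPair_cons]
    refine (((ha 0).mul hP.fst).add hP.snd |>.prodMk hP.fst).congr_deriv ?_
    rw [Fin.sum_univ_succ]
    ext <;> simp only [contPair_cons, contPair_fst, Prod.fst_add, Prod.snd_add, Prod.fst_sum,
      Prod.snd_sum, Prod.smul_fst, Prod.smul_snd, smul_eq_mul, Fin.val_zero, Fin.val_succ,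
      List.take_zero, List.drop_zero, List.take_succ_cons, List.drop_succ_cons, contPair_nil,
      mul_zero, mul_one, zero_add]
    simp only [mul_add, Finset.sum_add_distrib, Finset.mul_sum]
    ring_nf

theorem hasDerivAt_sum_mul_update {ι : Type*} [Fintype ι] [DecidableEq ι] (w x : ι → 𝕜) (j : ι)
    (t : 𝕜) : HasDerivAt (fun s => ∑ i, w i * Function.update x j s i) (w j) t := by
  have h i := (hasDerivAt_pi.1 (hasDerivAt_update x j t) i).const_mul (w i)
  simpa [Pi.single_apply] using HasDerivAt.fun_sum (u := Finset.univ) fun i _ => h i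

end Derivative

/-- For a depth-d continued-fraction ladder on ℝ^p with a_k = w_kᵀx, given as
f(x) = K_{d+1}(a_0,...,a_d)/K_d(a_1,...,a_d), at any x where K_d ≠ 0 the
partial derivative of f with respect to x_j equals
∑_{k=0}^d (−1)^k (K_{d−k}(a_{k+1},...,a_d)/K_d(a_1,...,a_d))² w_{jk}. -/
theorem hasDerivAt_ladder (p d : ℕ) (w : Fin (d + 1) → Fin p → ℝ)
    (x : Fin p → ℝ) (j : Fin p)
    (h : cont (List.ofFn fun i : Fin d => ∑ i', w i.succ i' * x i') ≠ 0) :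
    HasDerivAt
      (fun t : ℝ =>
        cont (List.ofFn fun k : Fin (d + 1) => ∑ i', w k i' * Function.update x j t i') /
          cont (List.ofFn fun i : Fin d => ∑ i', w i.succ i' * Function.update x j t i'))
      (∑ k : Fin (d + 1), (-1) ^ (k : ℕ) *
        (cont (List.ofFn fun i : Fin (d - (k : ℕ)) =>
              ∑ i', w ⟨(k : ℕ) + 1 + (i : ℕ), by omega⟩ i' * x i') /
            cont (List.ofFn fun i : Fin d => ∑ i', w i.succ i' * x i')) ^ 2 *
        w k j)
      (x j) := by
  have hP := hasDerivAt_contPair_ofFn fun k => hasDerivAt_sum_mul_update (w k) x j (x j)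
  have hq := hP.fst.div hP.snd (by rwa [contPair_ofFn_snd, Function.update_eq_self])
  simp only [Function.update_eq_self, contPair_fst] at hq
  rw [contPair_quotient_rule_eq_sum_sq] at hq
  simp only [contPair_ofFn_snd, List.drop_succ_ofFn, Fin.is_lt] at hq
  exact hq
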